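/- Let c₁, c₂ ∈ ℝ with c₁² + c₂² > 0. Then there exists a finite constant C = C(c₁,c₂) such that for every λ > 0, ∫_{[0,1]²} (λ + v₁² + v₂²)/((c₁·v₁ + c₂·v₂)² + (λ + v₁² + v₂²)²) dv₁ dv₂ ≤ C. -/

import Mathlib

/-!
With `A = λ + v₁² + v₂²` and `B = c₁ v₁ + c₂ v₂`, the integrand `A / (B² + A²)` is at most
`2 / (|B| + v₁²)`. If `c₂ ≠ 0`, then `|B| = |c₂| |v₂ + (c₁ / c₂) v₁|`, so for fixed `v₁` the
integral over `v₂` is bounded, uniformly in `λ`, by a constant plus a multiple of `log (1 / v₁)`,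
which is integrable on `(0, 1]`. The case `c₂ = 0` reduces to this one by exchanging coordinates.
-/

open MeasureTheory Set intervalIntegral Real

theorem div_sq_add_sq_le {A : ℝ} (hA : 0 < A) (B : ℝ) : A / (B ^ 2 + A ^ 2) ≤ 2 / (|B| + A) := by
  rw [div_le_div_iff₀ (by positivity) (by positivity)]
  nlinarith [sq_abs B, sq_nonneg (|B| - A)]

section LogIntegrals

variable {k t M : ℝ}

theorem integral_inv_mul_add (hk : 0 < k) (ht : 0 < t) (hM : 0 ≤ M) :
    ∫ u in 0..M, (k * u + t)⁻¹ = k⁻¹ * log ((k * M + t) / t) := by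
  rw [integral_comp_mul_add (fun u ↦ u⁻¹) hk.ne', integral_inv_of_pos (by simpa) (by positivity)]
  simp

theorem integral_inv_mul_abs_add (hk : 0 < k) (ht : 0 < t) (hM : 0 ≤ M) :
    ∫ u in -M..M, (k * |u| + t)⁻¹ = 2 * (k⁻¹ * log ((k * M + t) / t)) := by
  have hcont : Continuous fun u : ℝ ↦ (k * |u| + t)⁻¹ :=
    (by fun_prop : Continuous fun u : ℝ ↦ k * |u| + t).inv₀ fun u ↦ by positivity
  have hright : ∫ u in 0..M, (k * |u| + t)⁻¹ = k⁻¹ * log ((k * M + t) / t) := by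
    rw [← integral_inv_mul_add hk ht hM]
    refine integral_congr fun u hu ↦ ?_
    rw [uIcc_of_le hM] at hu
    simp only [abs_of_nonneg hu.1]
  have hleft : ∫ u in -M..0, (k * |u| + t)⁻¹ = ∫ u in 0..M, (k * |u| + t)⁻¹ := by
    simpa using (integral_comp_neg (a := 0) (b := M) fun u ↦ (k * |u| + t)⁻¹).symm
  rw [← integral_add_adjacent_intervals (hcont.intervalIntegrable _ _)
    (hcont.intervalIntegrable _ _), hleft, hright]
  ring

end LogIntegrals

theorem setIntegral_Icc_prod_Icc {f : ℝ × ℝ → ℝ} (hf : Continuous f) {a b c d : ℝ}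
    (hab : a ≤ b) (hcd : c ≤ d) :
    ∫ v in Icc a b ×ˢ Icc c d, f v = ∫ x in a..b, ∫ y in c..d, f (x, y) := by
  rw [Measure.volume_eq_prod, setIntegral_prod f
    (hf.continuousOn.integrableOn_compact (isCompact_Icc.prod isCompact_Icc))]
  simp only [integral_Icc_eq_integral_Ioc, integral_of_le hab, integral_of_le hcd]

noncomputable def driftKernel (c₁ c₂ lam : ℝ) (v : ℝ × ℝ) : ℝ :=
  (lam + v.1 ^ 2 + v.2 ^ 2) / ((c₁ * v.1 + c₂ * v.2) ^ 2 + (lam + v.1 ^ 2 + v.2 ^ 2) ^ 2)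

section Kernel

variable {c₁ c₂ lam : ℝ}

theorem continuous_driftKernel (hlam : 0 < lam) : Continuous (driftKernel c₁ c₂ lam) := by
  refine Continuous.div (by fun_prop) (by fun_prop) fun v ↦ ?_
  have : 0 < lam + v.1 ^ 2 + v.2 ^ 2 := by positivity
  positivity

theorem driftKernel_swap (v : ℝ × ℝ) : driftKernel c₁ c₂ lam v.swap = driftKernel c₂ c₁ lam v := by
  simp only [driftKernel, Prod.fst_swap, Prod.snd_swap]
  ring

theorem driftKernel_le (hc₂ : c₂ ≠ 0) (hlam : 0 < lam) {x : ℝ} (hx : 0 < x) (y : ℝ) :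
    driftKernel c₁ c₂ lam (x, y) ≤ 2 * (|c₂| * |y + c₁ / c₂ * x| + x ^ 2)⁻¹ := by
  have hB : |c₁ * x + c₂ * y| = |c₂| * |y + c₁ / c₂ * x| := by
    rw [← abs_mul]; congr 1; field_simp; ring
  calc driftKernel c₁ c₂ lam (x, y)
      ≤ 2 / (|c₁ * x + c₂ * y| + (lam + x ^ 2 + y ^ 2)) := div_sq_add_sq_le (by positivity) _
    _ ≤ 2 / (|c₁ * x + c₂ * y| + x ^ 2) := by gcongr; nlinarith [sq_nonneg y]
    _ = 2 * (|c₂| * |y + c₁ / c₂ * x| + x ^ 2)⁻¹ := by rw [hB, div_eq_mul_inv]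

theorem integral_driftKernel_le (hc₂ : c₂ ≠ 0) (hlam : 0 < lam) {x : ℝ} (hx : x ∈ Ioc 0 1) :
    ∫ y in 0..1, driftKernel c₁ c₂ lam (x, y) ≤
      4 * |c₂|⁻¹ * (log (|c₂| * (1 + |c₁ / c₂|) + 1) - 2 * log x) := by
  obtain ⟨hx₀, hx₁⟩ := hx
  set k := |c₂|
  set a := c₁ / c₂
  set M := 1 + |a|
  have hk : 0 < k := abs_pos.mpr hc₂
  have ht : 0 < x ^ 2 := by positivity
  have hg : Continuous fun u : ℝ ↦ (k * |u| + x ^ 2)⁻¹ :=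
    (by fun_prop : Continuous fun u : ℝ ↦ k * |u| + x ^ 2).inv₀ fun u ↦ by positivity
  have hax : |a * x| ≤ |a| := by
    rw [abs_mul, abs_of_pos hx₀]; nlinarith [abs_nonneg a]
  have hlog : log ((k * M + x ^ 2) / x ^ 2) ≤ log (k * M + 1) - 2 * log x := by
    rw [log_div (by positivity) ht.ne', log_pow]
    push_cast
    gcongr
    nlinarith
  calc ∫ y in 0..1, driftKernel c₁ c₂ lam (x, y)
      ≤ ∫ y in 0..1, 2 * (k * |y + a * x| + x ^ 2)⁻¹ :=
        integral_mono_on zero_le_one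
          (((continuous_driftKernel hlam).comp (Continuous.prodMk_right x)).intervalIntegrable _ _)
          (((hg.comp (continuous_add_const _)).const_mul 2).intervalIntegrable _ _)
          fun y _ ↦ driftKernel_le hc₂ hlam hx₀ y
    _ = 2 * ∫ u in a * x..1 + a * x, (k * |u| + x ^ 2)⁻¹ := by
        rw [intervalIntegral.integral_const_mul,
          integral_comp_add_right (fun u ↦ (k * |u| + x ^ 2)⁻¹)]
        simp
    _ ≤ 2 * ∫ u in -M..M, (k * |u| + x ^ 2)⁻¹ := by
        gcongr
        refine integral_mono_interval (by linarith [neg_abs_le (a * x)]) (by linarith)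
          (by linarith [le_abs_self (a * x)]) (Filter.Eventually.of_forall fun u ↦ ?_)
          (hg.intervalIntegrable _ _)
        positivity
    _ = 4 * k⁻¹ * log ((k * M + x ^ 2) / x ^ 2) := by
        rw [integral_inv_mul_abs_add hk ht (by positivity)]; ring
    _ ≤ 4 * k⁻¹ * (log (k * M + 1) - 2 * log x) := by gcongr

theorem exists_setIntegral_driftKernel_le (hc₂ : c₂ ≠ 0) :
    ∃ C : ℝ, ∀ lam : ℝ, 0 < lam →
      ∫ v in Icc (0 : ℝ) 1 ×ˢ Icc (0 : ℝ) 1, driftKernel c₁ c₂ lam v ≤ C := by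
  set L := log (|c₂| * (1 + |c₁ / c₂|) + 1)
  refine ⟨4 * |c₂|⁻¹ * (L + 2), fun lam hlam ↦ ?_⟩
  have hK := continuous_driftKernel (c₁ := c₁) (c₂ := c₂) hlam
  have hbound : IntervalIntegrable (fun x ↦ 4 * |c₂|⁻¹ * (L - 2 * log x)) volume 0 1 :=
    (intervalIntegrable_const.sub (intervalIntegrable_log'.const_mul 2)).const_mul _
  calc ∫ v in Icc (0 : ℝ) 1 ×ˢ Icc (0 : ℝ) 1, driftKernel c₁ c₂ lam v
      = ∫ x in 0..1, ∫ y in 0..1, driftKernel c₁ c₂ lam (x, y) :=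
        setIntegral_Icc_prod_Icc hK zero_le_one zero_le_one
    _ ≤ ∫ x in 0..1, 4 * |c₂|⁻¹ * (L - 2 * log x) :=
        integral_mono_on_of_le_Ioo zero_le_one
          ((continuous_parametric_intervalIntegral_of_continuous'
            (f := fun x y ↦ driftKernel c₁ c₂ lam (x, y)) hK 0 1).intervalIntegrable _ _)
          hbound fun x hx ↦ integral_driftKernel_le hc₂ hlam (Ioo_subset_Ioc_self hx)
    _ = 4 * |c₂|⁻¹ * (L + 2) := by
        rw [intervalIntegral.integral_const_mul,
          intervalIntegral.integral_sub intervalIntegrable_const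
            (intervalIntegrable_log'.const_mul 2),
          intervalIntegral.integral_const_mul, integral_log]
        simp

end Kernel

theorem stmt_7 (c₁ c₂ : ℝ) (hc : 0 < c₁ ^ 2 + c₂ ^ 2) :
    ∃ C : ℝ, ∀ lam : ℝ, 0 < lam →
      ∫ v in (Set.Icc (0 : ℝ) 1) ×ˢ (Set.Icc (0 : ℝ) 1),
          (lam + v.1 ^ 2 + v.2 ^ 2) /
            ((c₁ * v.1 + c₂ * v.2) ^ 2 + (lam + v.1 ^ 2 + v.2 ^ 2) ^ 2) ≤ C := by
  rcases ne_or_eq c₂ 0 with hc₂ | hc₂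
  · exact exists_setIntegral_driftKernel_le hc₂
  · have hc₁ : c₁ ≠ 0 := by rintro rfl; simp [hc₂] at hc
    obtain ⟨C, hC⟩ := exists_setIntegral_driftKernel_le (c₁ := c₂) hc₁
    refine ⟨C, fun lam hlam ↦ ?_⟩
    have hswap := setIntegral_prod_swap (μ := volume) (ν := volume)
      (Icc (0 : ℝ) 1) (Icc (0 : ℝ) 1) (driftKernel c₂ c₁ lam)
    simp only [driftKernel_swap, ← Measure.volume_eq_prod] at hswap
    exact hswap ▸ hC lam hlam
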